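/- Let C be a regular category in which all regular epimorphisms split, and T a monad on C. Then the Eilenberg–Moore category C^T is regular, and a morphism of T-algebras is a regular epimorphism in C^T if and only if its underlying morphism in C is a regular epimorphism. -/

import Mathlib

open CategoryTheory Limits

universe v u

namespace CorelPaper

/-- A regular category: finitely complete, with coequalizers of kernel pairs,
in which regular epimorphisms are stable under pullback. -/
structure IsRegularCat (D : Type u) [Category.{v} D] : Prop where
  hasFiniteLimits : HasFiniteLimits D
  hasCoeqOfKernelPairs : ∀ {R X Y : D} (f : X ⟶ Y) (a b : R ⟶ X),
    IsKernelPair f a b → HasCoequalizer a b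
  regularEpiStable : ∀ {P X Y Z : D} (fst : P ⟶ X) (snd : P ⟶ Y) (f : X ⟶ Z) (g : Y ⟶ Z),
    IsPullback fst snd f g → Nonempty (RegularEpi f) → Nonempty (RegularEpi snd)

/-!
Regular epimorphisms of `C` split, so the coequalizer in `C` of the kernel pair of an algebra
morphism is a split coequalizer. The forgetful functor `U : C^T ⥤ C` is monadic, hence creates
coequalizers of such `U`-split pairs: kernel pairs therefore have coequalizers in `C^T`, and an
algebra morphism is the coequalizer of its kernel pair exactly when its underlying morphism is.
Since `U` also preserves pullbacks, pullback-stability of regular epimorphisms transfers from `C`.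
-/

section SplitCoequalizer

variable {C : Type u} [Category.{v} C]

variable (C) in
def RegularEpisSplit : Prop :=
  ∀ {X Y : C} (f : X ⟶ Y), Nonempty (RegularEpi f) → ∃ s : Y ⟶ X, s ≫ f = 𝟙 Y

/-- The left section is `(π ≫ s, 𝟙 X)`, which lands in the kernel pair because `h` factors
through `π`. -/
noncomputable def isSplitCoequalizerOfIsKernelPair {R X Y Z : C} {h : X ⟶ Y} {a b : R ⟶ X}
    (hk : IsKernelPair h a b) {π : X ⟶ Z} (hπ : a ≫ π = b ≫ π)
    {s : Z ⟶ X} (hs : s ≫ π = 𝟙 Z) {m : Z ⟶ Y} (hm : π ≫ m = h) :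
    IsSplitCoequalizer a b π where
  rightSection := s
  leftSection := hk.lift (π ≫ s) (𝟙 X) (by
    rw [← hm, Category.id_comp, Category.assoc, reassoc_of% hs])
  condition := hπ
  rightSection_π := hs
  leftSection_bottom := hk.lift_snd _ _ _
  leftSection_top := hk.lift_fst _ _ _

theorem hasSplitCoequalizer_of_isKernelPair
    (hsplit : RegularEpisSplit C)
    {R X Y : C} {h : X ⟶ Y} {a b : R ⟶ X} (hk : IsKernelPair h a b) [HasCoequalizer a b] :
    HasSplitCoequalizer a b := by
  obtain ⟨s, hs⟩ := hsplit (coequalizer.π a b) ⟨coequalizerRegular a b⟩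
  exact ⟨_, coequalizer.π a b, ⟨isSplitCoequalizerOfIsKernelPair hk (coequalizer.condition a b)
    hs (coequalizer.π_desc h hk.w)⟩⟩

theorem hasColimit_parallelPair_comp_of_isSplitPair {D : Type*} [Category D] (G : D ⥤ C)
    {X Y : D} (a b : X ⟶ Y) [G.IsSplitPair a b] : HasColimit (parallelPair a b ⋙ G) :=
  hasColimit_of_iso (F := parallelPair (G.map a) (G.map b)) (diagramIsoParallelPair _)

end SplitCoequalizer

section EilenbergMoore

variable {C : Type u} [Category.{v} C] {T : Monad C}

attribute [local instance] hasColimit_parallelPair_comp_of_isSplitPair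

theorem isPullback_forget {P X Y Z : T.Algebra} {fst : P ⟶ X} {snd : P ⟶ Y}
    {f : X ⟶ Z} {g : Y ⟶ Z} (h : IsPullback fst snd f g) :
    IsPullback fst.f snd.f f.f g.f :=
  T.forget.map_isPullback h

theorem isSplitPair_forget_of_isKernelPair (hC : IsRegularCat C)
    (hsplit : RegularEpisSplit C)
    {R A B : T.Algebra} {f : A ⟶ B} {a b : R ⟶ A} (hk : IsKernelPair f a b) :
    T.forget.IsSplitPair a b :=
  have hkC := isPullback_forget hk
  have : HasCoequalizer (T.forget.map a) (T.forget.map b) :=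
    hC.hasCoeqOfKernelPairs f.f a.f b.f hkC
  hasSplitCoequalizer_of_isKernelPair hsplit hkC

theorem hasCoequalizer_of_isSplitPair_forget {R A : T.Algebra} (a b : R ⟶ A)
    [T.forget.IsSplitPair a b] : HasCoequalizer a b :=
  have := Monad.createsGSplitCoequalizersOfMonadic T.forget a b
  hasColimit_of_created _ T.forget

theorem hasFiniteLimits_algebra [HasFiniteLimits C] : HasFiniteLimits T.Algebra :=
  ⟨fun _ _ _ => hasLimitsOfShape_of_hasLimitsOfShape_createsLimitsOfShape T.forget⟩

theorem nonempty_regularEpi_iff_forget (hC : IsRegularCat C)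
    (hsplit : RegularEpisSplit C)
    {A B : T.Algebra} (f : A ⟶ B) :
    Nonempty (RegularEpi f) ↔ Nonempty (RegularEpi f.f) := by
  have := hC.hasFiniteLimits
  have := hasFiniteLimits_algebra (T := T)
  have hk : IsKernelPair f (pullback.fst f f) (pullback.snd f f) := IsPullback.of_hasPullback f f
  have hkC : IsKernelPair f.f (pullback.fst f f).f (pullback.snd f f).f := isPullback_forget hk
  have := isSplitPair_forget_of_isKernelPair hC hsplit hk
  have := Monad.createsGSplitCoequalizersOfMonadic T.forget (pullback.fst f f) (pullback.snd f f)
  constructor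
  · rintro ⟨hf⟩
    exact ⟨⟨_, _, _, hkC.w, isColimitCoforkMapOfIsColimit T.forget hk.w (hk.toCoequalizer hf)⟩⟩
  · rintro ⟨hf⟩
    exact ⟨⟨_, _, _, hk.w, isColimitOfIsColimitCoforkMap T.forget hk.w (hkC.toCoequalizer hf)⟩⟩

end EilenbergMoore

/-- Let `C` be a regular category in which every regular
epimorphism splits, and let `T` be a monad on `C`. Then the Eilenberg–Moore
category `C^T` is regular, and a morphism of `T`-algebras is a regular
epimorphism in `C^T` iff its underlying morphism in `C` is a regular
epimorphism. -/
theorem eilenbergMoore_regular {C : Type u} [Category.{v} C] (hC : IsRegularCat C)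
    (hsplit : ∀ {X Y : C} (f : X ⟶ Y), Nonempty (RegularEpi f) →
      ∃ s : Y ⟶ X, s ≫ f = 𝟙 Y)
    (T : Monad C) :
    IsRegularCat T.Algebra ∧
    ∀ {A B : T.Algebra} (f : A ⟶ B),
      Nonempty (RegularEpi f) ↔ Nonempty (RegularEpi f.f) := by
  have := hC.hasFiniteLimits
  refine ⟨⟨hasFiniteLimits_algebra, fun f a b hk => ?_, fun fst snd f g hpb hf => ?_⟩,
    nonempty_regularEpi_iff_forget hC hsplit⟩
  · have := isSplitPair_forget_of_isKernelPair hC hsplit hk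
    exact hasCoequalizer_of_isSplitPair_forget a b
  · rw [nonempty_regularEpi_iff_forget hC hsplit] at hf ⊢
    exact hC.regularEpiStable _ _ _ _ (isPullback_forget hpb) hf

end CorelPaper
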